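/- arXiv:2304.02385 — 3 statements merged into one kernel-verified Lean document; each statement's English description precedes it below -/
import Mathlib

section
/- For all real numbers a and b, the integral over ℝ of 1/((1+(t-a)^2)(1+(t-b)^2)) dt equals 2π/(4+(a-b)^2). -/
/-!
Write `u = t - a`, `v = t - b`. The polynomial identity
`(1 + u²) + (1 + v²) + 2 (1 - u v) = 4 + (u - v)²` splits `(4 + (a - b)²)` times the integrand
into two translated Cauchy kernels, each of integral `π`, plus `2 (1 - u v) / ((1 + u²) (1 + v²))`.
The latter has integral zero: it is the derivative of `(log (1 + u²) - log (1 + v²)) / (2 (b - a))`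
if `a ≠ b`, and of `u / (1 + u²)` if `a = b`, and both primitives vanish at `±∞`.
-/

open MeasureTheory Real Filter Topology Bornology

theorem integral_eq_zero_of_hasDerivAt_of_tendsto_cobounded {E : Type*} [NormedAddCommGroup E]
    [NormedSpace ℝ E] [CompleteSpace E] {f f' : ℝ → E} {m : E}
    (hderiv : ∀ x, HasDerivAt f (f' x) x) (hf' : Integrable f')
    (hf : Tendsto f (cobounded ℝ) (𝓝 m)) : ∫ x, f' x = 0 := by
  rw [integral_of_hasDerivAt_of_tendsto hderiv hf'
    (hf.mono_left IsOrderBornology.atBot_le_cobounded)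
    (hf.mono_left IsOrderBornology.atTop_le_cobounded), sub_self]

theorem four_add_sq_sub_div_one_add_sq_mul_one_add_sq (u v : ℝ) :
    (4 + (v - u) ^ 2) / ((1 + u ^ 2) * (1 + v ^ 2)) =
      (1 + u ^ 2)⁻¹ + (1 + v ^ 2)⁻¹ + 2 * ((1 - u * v) / ((1 + u ^ 2) * (1 + v ^ 2))) := by
  field_simp
  ring

theorem integrable_inv_one_add_sq_sub (a : ℝ) : Integrable fun t : ℝ => (1 + (t - a) ^ 2)⁻¹ :=
  integrable_inv_one_add_sq.comp_sub_right a

theorem integral_inv_one_add_sq_sub (a : ℝ) : ∫ t : ℝ, (1 + (t - a) ^ 2)⁻¹ = π := by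
  rw [integral_sub_right_eq_self (fun t => (1 + t ^ 2)⁻¹) a, integral_univ_inv_one_add_sq]

theorem integrable_one_sub_mul_div_one_add_sq_sub_mul (a b : ℝ) :
    Integrable fun t : ℝ => (1 - (t - a) * (t - b)) / ((1 + (t - a) ^ 2) * (1 + (t - b) ^ 2)) := by
  refine ((integrable_inv_one_add_sq_sub a).add (integrable_inv_one_add_sq_sub b)).mono'
    (by fun_prop : Measurable _).aestronglyMeasurable (.of_forall fun t => ?_)
  have hP : 0 < 1 + (t - a) ^ 2 := by positivity
  have hQ : 0 < 1 + (t - b) ^ 2 := by positivity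
  rw [Pi.add_apply, norm_div, Real.norm_eq_abs, Real.norm_eq_abs, abs_of_pos (mul_pos hP hQ),
    div_le_iff₀ (mul_pos hP hQ), abs_le]
  field_simp
  constructor <;> nlinarith [sq_nonneg (t - a + (t - b)), sq_nonneg (t - a - (t - b))]

theorem tendsto_one_add_sq_sub_div_sq_cobounded (a : ℝ) :
    Tendsto (fun t : ℝ => (1 + (t - a) ^ 2) / t ^ 2) (cobounded ℝ) (𝓝 1) := by
  have h : Tendsto (fun t : ℝ => t⁻¹ ^ 2 + (1 - a * t⁻¹) ^ 2) (cobounded ℝ)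
      (𝓝 (0 ^ 2 + (1 - a * 0) ^ 2)) :=
    (tendsto_inv₀_cobounded.pow 2).add (((tendsto_inv₀_cobounded.const_mul a).const_sub 1).pow 2)
  simp only [zero_pow two_ne_zero, mul_zero, sub_zero, one_pow, zero_add] at h
  refine h.congr' ((eventually_ne_cobounded 0).mono fun t ht => ?_)
  field_simp

theorem tendsto_log_one_add_sq_sub_sub_log_cobounded (a b : ℝ) :
    Tendsto (fun t : ℝ => log (1 + (t - a) ^ 2) - log (1 + (t - b) ^ 2)) (cobounded ℝ) (𝓝 0) := by
  have h := ((tendsto_one_add_sq_sub_div_sq_cobounded a).log one_ne_zero).sub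
    ((tendsto_one_add_sq_sub_div_sq_cobounded b).log one_ne_zero)
  rw [log_one, sub_self] at h
  refine h.congr' ((eventually_ne_cobounded 0).mono fun t ht => ?_)
  rw [log_div (by positivity) (by positivity), log_div (by positivity) (by positivity)]
  ring

theorem tendsto_sub_div_one_add_sq_sub_cobounded (a : ℝ) :
    Tendsto (fun t : ℝ => (t - a) / (1 + (t - a) ^ 2)) (cobounded ℝ) (𝓝 0) := by
  have h : Tendsto (fun t : ℝ => (t⁻¹ - a * t⁻¹ ^ 2) / ((1 + (t - a) ^ 2) / t ^ 2)) (cobounded ℝ)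
      (𝓝 ((0 - a * 0 ^ 2) / 1)) :=
    (tendsto_inv₀_cobounded.sub ((tendsto_inv₀_cobounded.pow 2).const_mul a)).div
      (tendsto_one_add_sq_sub_div_sq_cobounded a) one_ne_zero
  simp only [zero_pow two_ne_zero, mul_zero, sub_zero, zero_div] at h
  refine h.congr' ((eventually_ne_cobounded 0).mono fun t ht => ?_)
  field_simp

theorem hasDerivAt_one_add_sq_sub (a t : ℝ) :
    HasDerivAt (fun t => 1 + (t - a) ^ 2) (2 * (t - a)) t := by
  simpa using (((hasDerivAt_id' t).sub_const a).pow 2).const_add 1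

theorem hasDerivAt_log_one_add_sq_sub_sub_log (a b t : ℝ) :
    HasDerivAt (fun t => log (1 + (t - a) ^ 2) - log (1 + (t - b) ^ 2))
      (2 * (b - a) * ((1 - (t - a) * (t - b)) / ((1 + (t - a) ^ 2) * (1 + (t - b) ^ 2)))) t := by
  refine (((hasDerivAt_one_add_sq_sub a t).log (by positivity)).sub
    ((hasDerivAt_one_add_sq_sub b t).log (by positivity))).congr_deriv ?_
  field_simp
  ring

theorem hasDerivAt_sub_div_one_add_sq_sub (a t : ℝ) :
    HasDerivAt (fun t => (t - a) / (1 + (t - a) ^ 2))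
      ((1 - (t - a) * (t - a)) / ((1 + (t - a) ^ 2) * (1 + (t - a) ^ 2))) t := by
  refine (((hasDerivAt_id' t).sub_const a).div (hasDerivAt_one_add_sq_sub a t)
    (by positivity)).congr_deriv ?_
  field_simp
  ring

theorem integral_one_sub_mul_div_one_add_sq_sub_mul (a b : ℝ) :
    ∫ t : ℝ, (1 - (t - a) * (t - b)) / ((1 + (t - a) ^ 2) * (1 + (t - b) ^ 2)) = 0 := by
  have hint := integrable_one_sub_mul_div_one_add_sq_sub_mul a b
  rcases eq_or_ne a b with rfl | hab
  · exact integral_eq_zero_of_hasDerivAt_of_tendsto_cobounded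
      (hasDerivAt_sub_div_one_add_sq_sub a) hint (tendsto_sub_div_one_add_sq_sub_cobounded a)
  · have h := integral_eq_zero_of_hasDerivAt_of_tendsto_cobounded
      (hasDerivAt_log_one_add_sq_sub_sub_log a b) (hint.const_mul _)
      (tendsto_log_one_add_sq_sub_sub_log_cobounded a b)
    rw [integral_const_mul, mul_eq_zero] at h
    exact h.resolve_left (mul_ne_zero two_ne_zero (sub_ne_zero.mpr hab.symm))

theorem cauchy_kernel_convolution (a b : ℝ) :
    ∫ t : ℝ, 1 / ((1 + (t - a) ^ 2) * (1 + (t - b) ^ 2)) =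
      2 * π / (4 + (a - b) ^ 2) := by
  have hP := integrable_inv_one_add_sq_sub a
  have hQ := integrable_inv_one_add_sq_sub b
  have hR := integrable_one_sub_mul_div_one_add_sq_sub_mul a b
  have hsplit : ∫ t : ℝ, (4 + (a - b) ^ 2) / ((1 + (t - a) ^ 2) * (1 + (t - b) ^ 2)) = 2 * π := by
    have h t := four_add_sq_sub_div_one_add_sq_mul_one_add_sq (t - a) (t - b)
    simp only [sub_sub_sub_cancel_left] at h
    rw [integral_congr_ae (.of_forall h), integral_add (by exact hP.add hQ) (hR.const_mul 2),
      integral_add hP hQ, integral_const_mul, integral_inv_one_add_sq_sub,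
      integral_inv_one_add_sq_sub, integral_one_sub_mul_div_one_add_sq_sub_mul]
    ring
  rw [eq_div_iff (by positivity), ← hsplit, ← integral_mul_const]
  simp only [one_div_mul_eq_div]
end

section
/- Let 1 ≤ p < ∞, δ > 0, and let f : ℝ → ℂ be continuously differentiable with f ∈ L^p(ℝ) and f' ∈ L^p(ℝ). For each k ∈ ℤ choose t_k ∈ [kδ, (k+1)δ]. Then (∑_{k∈ℤ} |f(t_k)|^p)^{1/p} ≤ δ^{-1/p} ‖f‖_p + δ^{1-1/p} ‖f'‖_p. -/
/-!
On the cell `I_k = [kδ, (k+1)δ]`, `f (t k)` differs from every `f x` by at most `∫_{I_k} ‖f'‖`.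
Averaging over `x ∈ I_k` and applying Hölder's inequality to both integrals gives
`‖f (t k)‖ ≤ δ^(-1/p) ‖f‖_{L^p(I_k)} + δ^(1-1/p) ‖f'‖_{L^p(I_k)}`. Minkowski's inequality in
`ℓ^p(ℤ)` and the fact that the cells tile `ℝ`, overlapping only at their endpoints, finish the
proof. The estimate is proved in `ℝ≥0∞`; the `MemLp` hypotheses make the right-hand side finite,
so that it survives the passage to real numbers.
-/

open MeasureTheory Set
open scoped ENNReal

namespace ENNReal

variable {ι : Type*} {p : ℝ}

theorem Lp_add_le_tsum (hp : 1 ≤ p) (u v : ι → ℝ≥0∞) :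
    (∑' i, (u i + v i) ^ p) ^ (1 / p) ≤
      (∑' i, u i ^ p) ^ (1 / p) + (∑' i, v i ^ p) ^ (1 / p) := by
  let _ : MeasurableSpace ι := ⊤
  simpa only [lintegral_count, Pi.add_apply] using
    lintegral_Lp_add_le (μ := Measure.count (α := ι)) measurable_from_top.aemeasurable
      measurable_from_top.aemeasurable hp

theorem tsum_mul_left_rpow_rpow_one_div (hp : 0 < p) (c : ℝ≥0∞) (u : ι → ℝ≥0∞) :
    (∑' i, (c * u i) ^ p) ^ (1 / p) = c * (∑' i, u i ^ p) ^ (1 / p) := by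
  simp_rw [mul_rpow_of_nonneg _ _ hp.le, ENNReal.tsum_mul_left]
  rw [mul_rpow_of_nonneg _ _ (one_div_nonneg.2 hp.le), ← rpow_mul, mul_one_div_cancel hp.ne',
    rpow_one]

end ENNReal

section Lp

variable {α ε : Type*} [MeasurableSpace α] [TopologicalSpace ε] [ContinuousENorm ε]
  {μ : Measure α} {p : ℝ}

theorem eLpNorm_ofReal_rpow_eq_lintegral (hp : 0 < p) (g : α → ε) :
    eLpNorm g (ENNReal.ofReal p) μ ^ p = ∫⁻ x, ‖g x‖ₑ ^ p ∂μ := by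
  rw [eLpNorm_eq_lintegral_rpow_enorm_toReal (by simpa using hp) ENNReal.ofReal_ne_top,
    ENNReal.toReal_ofReal hp.le, ← ENNReal.rpow_mul, one_div_mul_cancel hp.ne', ENNReal.rpow_one]

theorem setLIntegral_enorm_le_measure_rpow_mul_eLpNorm {s : Set α} {g : α → ε}
    (hg : AEStronglyMeasurable g (μ.restrict s)) (hp : 1 ≤ p) :
    ∫⁻ x in s, ‖g x‖ₑ ∂μ ≤ μ s ^ (1 - 1 / p) * eLpNorm g (ENNReal.ofReal p) (μ.restrict s) := by
  have := eLpNorm_le_eLpNorm_mul_rpow_measure_univ (ENNReal.one_le_ofReal.2 hp) hg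
  rwa [eLpNorm_one_eq_lintegral_enorm, Measure.restrict_apply_univ, ENNReal.toReal_one,
    ENNReal.toReal_ofReal (by linarith), div_one, mul_comm] at this

theorem tsum_eLpNorm_restrict_rpow_le {ι : Type*} [Countable ι] {s : ι → Set α}
    (hs : ∀ i, MeasurableSet (s i)) (hd : Pairwise (Function.onFun Disjoint s)) (hp : 0 < p)
    (g : α → ε) :
    ∑' i, eLpNorm g (ENNReal.ofReal p) (μ.restrict (s i)) ^ p ≤
      eLpNorm g (ENNReal.ofReal p) μ ^ p := by
  simp only [eLpNorm_ofReal_rpow_eq_lintegral hp]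
  rw [← lintegral_iUnion hs hd]
  exact setLIntegral_le_lintegral _ _

theorem tsum_eLpNorm_restrict_Icc_rpow_rpow_le (hp : 0 < p) (δ : ℝ) (g : ℝ → ε) :
    (∑' k : ℤ, eLpNorm g (ENNReal.ofReal p)
        (volume.restrict (Icc ((k : ℝ) * δ) ((k + 1 : ℝ) * δ))) ^ p) ^ (1 / p) ≤
      eLpNorm g (ENNReal.ofReal p) volume := by
  have hIco :
      Pairwise (Function.onFun Disjoint fun k : ℤ => Ico ((k : ℝ) * δ) ((k + 1 : ℝ) * δ)) := by
    simpa only [zsmul_eq_mul, Int.cast_add, Int.cast_one] using Set.pairwise_disjoint_Ico_zsmul δ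
  simp only [← Measure.restrict_congr_set Ico_ae_eq_Icc]
  calc _ ≤ (eLpNorm g (ENNReal.ofReal p) volume ^ p) ^ (1 / p) := by
        gcongr
        exact tsum_eLpNorm_restrict_rpow_le (fun _ => measurableSet_Ico) hIco hp g
    _ = _ := by rw [one_div, ENNReal.rpow_rpow_inv hp.ne']

end Lp

section Calculus

variable {E : Type*} [NormedAddCommGroup E] [NormedSpace ℝ E] {f : ℝ → E} {a b : ℝ}

theorem enorm_sub_le_setLIntegral_deriv (hf : ContDiffOn ℝ 1 f (Icc a b)) {x y : ℝ}
    (hx : x ∈ Icc a b) (hy : y ∈ Icc a b) :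
    ‖f y - f x‖ₑ ≤ ∫⁻ s in Icc a b, ‖deriv f s‖ₑ := by
  wlog hxy : x ≤ y generalizing x y
  · rw [enorm_sub_rev]
    exact this hy hx (le_of_not_ge hxy)
  have hsub : Icc x y ⊆ Icc a b := Icc_subset_Icc hx.1 hy.2
  exact (enorm_sub_le_lintegral_deriv_of_contDiffOn_Icc (hf.mono hsub) hxy).trans
    (lintegral_mono_set hsub)

theorem ofReal_sub_mul_enorm_le (hf : ContDiffOn ℝ 1 f (Icc a b)) {t : ℝ} (ht : t ∈ Icc a b) :
    ENNReal.ofReal (b - a) * ‖f t‖ₑ ≤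
      (∫⁻ x in Icc a b, ‖f x‖ₑ) + ENNReal.ofReal (b - a) * ∫⁻ s in Icc a b, ‖deriv f s‖ₑ := by
  set C := ∫⁻ s in Icc a b, ‖deriv f s‖ₑ
  calc ENNReal.ofReal (b - a) * ‖f t‖ₑ = ∫⁻ _ in Icc a b, ‖f t‖ₑ := by
        rw [setLIntegral_const, Real.volume_Icc, mul_comm]
    _ ≤ ∫⁻ x in Icc a b, (‖f x‖ₑ + C) := by
        refine setLIntegral_mono' measurableSet_Icc fun x hx => ?_
        calc ‖f t‖ₑ = ‖f x + (f t - f x)‖ₑ := by rw [add_sub_cancel]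
          _ ≤ ‖f x‖ₑ + C := by
            grw [enorm_add_le, enorm_sub_le_setLIntegral_deriv hf hx ht]
    _ = (∫⁻ x in Icc a b, ‖f x‖ₑ) + ENNReal.ofReal (b - a) * C := by
        rw [lintegral_add_right _ measurable_const, setLIntegral_const, Real.volume_Icc, mul_comm]

theorem enorm_le_eLpNorm_restrict_Icc [CompleteSpace E] {p : ℝ} (hp : 1 ≤ p) (hab : a < b)
    (hf : ContDiffOn ℝ 1 f (Icc a b)) {t : ℝ} (ht : t ∈ Icc a b) :
    ‖f t‖ₑ ≤ ENNReal.ofReal (b - a) ^ (-1 / p) *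
        eLpNorm f (ENNReal.ofReal p) (volume.restrict (Icc a b)) +
      ENNReal.ofReal (b - a) ^ (1 - 1 / p) *
        eLpNorm (deriv f) (ENNReal.ofReal p) (volume.restrict (Icc a b)) := by
  set L := ENNReal.ofReal (b - a)
  have hL0 : L ≠ 0 := by simpa [L] using hab
  have hL : L * L ^ (-1 / p) = L ^ (1 - 1 / p) := by
    rw [sub_eq_add_neg, ← neg_div, ENNReal.rpow_add _ _ hL0 ENNReal.ofReal_ne_top,
      ENNReal.rpow_one]
  have holder := fun (g : ℝ → E) (hg : AEStronglyMeasurable g (volume.restrict (Icc a b))) =>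
    Real.volume_Icc (a := a) ▸ setLIntegral_enorm_le_measure_rpow_mul_eLpNorm hg hp
  rw [← ENNReal.mul_le_mul_iff_right hL0 ENNReal.ofReal_ne_top, mul_add, ← mul_assoc, hL]
  calc L * ‖f t‖ₑ
      ≤ (∫⁻ x in Icc a b, ‖f x‖ₑ) + L * ∫⁻ s in Icc a b, ‖deriv f s‖ₑ :=
        ofReal_sub_mul_enorm_le hf ht
    _ ≤ _ := by
      gcongr
      · exact holder f (hf.continuousOn.aestronglyMeasurable measurableSet_Icc)
      · exact holder (deriv f) (aestronglyMeasurable_deriv f _)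

theorem tsum_enorm_rpow_rpow_le [CompleteSpace E] {p δ : ℝ} (hp : 1 ≤ p) (hδ : 0 < δ)
    (hf : ContDiff ℝ 1 f) {t : ℤ → ℝ} (ht : ∀ k : ℤ, t k ∈ Icc ((k : ℝ) * δ) ((k + 1 : ℝ) * δ)) :
    (∑' k, ‖f (t k)‖ₑ ^ p) ^ (1 / p) ≤
      ENNReal.ofReal δ ^ (-1 / p) * eLpNorm f (ENNReal.ofReal p) volume +
        ENNReal.ofReal δ ^ (1 - 1 / p) * eLpNorm (deriv f) (ENNReal.ofReal p) volume := by
  have hp0 : 0 < p := by linarith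
  set A := ENNReal.ofReal δ ^ (-1 / p)
  set B := ENNReal.ofReal δ ^ (1 - 1 / p)
  set N : (ℝ → E) → ℤ → ℝ≥0∞ := fun g k =>
    eLpNorm g (ENNReal.ofReal p) (volume.restrict (Icc ((k : ℝ) * δ) ((k + 1 : ℝ) * δ)))
  calc (∑' k, ‖f (t k)‖ₑ ^ p) ^ (1 / p)
      ≤ (∑' k, (A * N f k + B * N (deriv f) k) ^ p) ^ (1 / p) := by
        gcongr with k
        have hlen : ((k : ℝ) + 1) * δ - k * δ = δ := by ring
        simpa only [hlen] using
          enorm_le_eLpNorm_restrict_Icc hp (by nlinarith) hf.contDiffOn (ht k)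
    _ ≤ (∑' k, (A * N f k) ^ p) ^ (1 / p) + (∑' k, (B * N (deriv f) k) ^ p) ^ (1 / p) :=
        ENNReal.Lp_add_le_tsum hp _ _
    _ = A * (∑' k, N f k ^ p) ^ (1 / p) + B * (∑' k, N (deriv f) k ^ p) ^ (1 / p) := by
        rw [ENNReal.tsum_mul_left_rpow_rpow_one_div hp0,
          ENNReal.tsum_mul_left_rpow_rpow_one_div hp0]
    _ ≤ A * eLpNorm f (ENNReal.ofReal p) volume +
          B * eLpNorm (deriv f) (ENNReal.ofReal p) volume := by
        gcongr <;> exact tsum_eLpNorm_restrict_Icc_rpow_rpow_le hp0 δ _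

end Calculus

theorem sample_sum_bound (p δ : ℝ) (hp : 1 ≤ p) (hδ : 0 < δ)
    (f : ℝ → ℂ) (hf : ContDiff ℝ 1 f)
    (hfp : MemLp f (ENNReal.ofReal p) volume)
    (hf'p : MemLp (deriv f) (ENNReal.ofReal p) volume)
    (t : ℤ → ℝ) (ht : ∀ k : ℤ, t k ∈ Set.Icc ((k : ℝ) * δ) ((k + 1 : ℝ) * δ)) :
    (∑' k : ℤ, ‖f (t k)‖ ^ p) ^ (1 / p) ≤
      δ ^ (-1 / p) * (eLpNorm f (ENNReal.ofReal p) volume).toReal +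
        δ ^ (1 - 1 / p) * (eLpNorm (deriv f) (ENNReal.ofReal p) volume).toReal := by
  have hrpow (r : ℝ) : ENNReal.ofReal δ ^ r ≠ ⊤ := by
    rw [ENNReal.ofReal_rpow_of_pos hδ]; exact ENNReal.ofReal_ne_top
  have hfin₁ := ENNReal.mul_ne_top (hrpow (-1 / p)) hfp.eLpNorm_ne_top
  have hfin₂ := ENNReal.mul_ne_top (hrpow (1 - 1 / p)) hf'p.eLpNorm_ne_top
  have hlhs :
      ((∑' k, ‖f (t k)‖ₑ ^ p) ^ (1 / p)).toReal = (∑' k : ℤ, ‖f (t k)‖ ^ p) ^ (1 / p) := by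
    rw [← ENNReal.toReal_rpow, ENNReal.tsum_toReal_eq fun k => by finiteness]
    simp only [← ENNReal.toReal_rpow, toReal_enorm]
  have h := ENNReal.toReal_mono (ENNReal.add_ne_top.2 ⟨hfin₁, hfin₂⟩)
    (tsum_enorm_rpow_rpow_le hp hδ hf ht)
  rwa [hlhs, ENNReal.toReal_add hfin₁ hfin₂, ENNReal.toReal_mul, ENNReal.toReal_mul,
    ← ENNReal.toReal_rpow, ← ENNReal.toReal_rpow, ENNReal.toReal_ofReal hδ.le] at h
end

section
/- Let Ξ : ℝ → ℝ be continuous with |Ξ(x)| ≤ min(1,|x|⁻¹), let α, δ > 0, and μ a σ-finite Borel measure on ℝ with sup_{x∈ℝ} μ([x, x+δ/α]) < ∞. Then for all real a, b: ∫_ℝ Ξ(αx-a)² Ξ(αx-b)² dμ(x) ≤ 8π (C_δ²/δ) · (sup_{x∈ℝ} μ([x, x+δ/α]))/(4+(b-a)²), where C_δ = max(4, 1+9δ²). -/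
/-!
Since `Ξ t ^ 2 ≤ 2 / (1 + t ^ 2)`, the integrand is at most `4 G` with
`G x = (1 + (α x - a)²)⁻¹ (1 + (α x - b)²)⁻¹`. By Peetre's inequality each factor of `G` changes
by at most the factor `2 (1 + δ²) ≤ C_δ` over a distance `δ / α`, so on every interval
`[n δ / α, (n + 1) δ / α)` the function `G` is at most `C_δ²` times its Lebesgue mean there.
Integrating this against `μ` interval by interval gives
`∫ G dμ ≤ C_δ² (α / δ) sup_x μ [x, x + δ / α] ∫ G dx`, and `∫ G dx = (2π / α) / (4 + (b - a)²)`
is a convolution of two Cauchy kernels.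
-/

open MeasureTheory Real
open Filter Topology Set Bornology
open scoped ENNReal

theorem setLIntegral_mul_measure_le_of_le_mul {α : Type*} [MeasurableSpace α] {μ ν : Measure α}
    {s : Set α} (hs : MeasurableSet s) {g : α → ℝ≥0∞} {K : ℝ≥0∞} (hK : K ≠ ∞)
    (hg : ∀ x ∈ s, ∀ y ∈ s, g x ≤ K * g y) :
    (∫⁻ x in s, g x ∂μ) * ν s ≤ K * μ s * ∫⁻ y in s, g y ∂ν := by
  have hpt : ∀ x ∈ s, g x * ν s ≤ K * ∫⁻ y in s, g y ∂ν := fun x hx =>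
    calc g x * ν s = ∫⁻ _ in s, g x ∂ν := (setLIntegral_const s (g x)).symm
      _ ≤ ∫⁻ y in s, K * g y ∂ν := setLIntegral_mono' hs (hg x hx)
      _ = K * ∫⁻ y in s, g y ∂ν := lintegral_const_mul' K _ hK
  calc (∫⁻ x in s, g x ∂μ) * ν s ≤ ∫⁻ x in s, g x * ν s ∂μ := lintegral_mul_const_le _ _
    _ ≤ ∫⁻ _ in s, K * ∫⁻ y in s, g y ∂ν ∂μ := setLIntegral_mono' hs hpt
    _ = K * μ s * ∫⁻ y in s, g y ∂ν := by rw [setLIntegral_const]; ring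

theorem lintegral_mul_le_of_le_mul_of_abs_sub_lt {μ : Measure ℝ} {g : ℝ → ℝ≥0∞} {h : ℝ}
    (hh : 0 < h) {K : ℝ≥0∞} (hK : K ≠ ∞) (hg : ∀ x y, |x - y| < h → g x ≤ K * g y) :
    (∫⁻ x, g x ∂μ) * ENNReal.ofReal h ≤ K * (⨆ x, μ (Icc x (x + h))) * ∫⁻ x, g x := by
  set S : ℤ → Set ℝ := fun n => Ico (n • h) ((n + 1) • h)
  have hS : ∀ n, MeasurableSet (S n) := fun n => measurableSet_Ico
  have hdisj : Pairwise (Function.onFun Disjoint S) := pairwise_disjoint_Ico_zsmul h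
  have hcover : ⋃ n, S n = univ := iUnion_Ico_zsmul hh
  have hright : ∀ n : ℤ, (n + 1) • h = n • h + h := fun n => by rw [add_smul, one_smul]
  have hpiece : ∀ n, (∫⁻ x in S n, g x ∂μ) * ENNReal.ofReal h
      ≤ K * (⨆ x, μ (Icc x (x + h))) * ∫⁻ x in S n, g x := fun n => by
    have hvol : volume (S n) = ENNReal.ofReal h := by simp [S, hright]
    calc (∫⁻ x in S n, g x ∂μ) * ENNReal.ofReal h
        ≤ K * μ (S n) * ∫⁻ x in S n, g x :=
          hvol ▸ setLIntegral_mul_measure_le_of_le_mul (hS n) hK fun x hx y hy => hg x y <| by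
            simp only [S, mem_Ico, hright] at hx hy
            rw [abs_lt]
            constructor <;> linarith
      _ ≤ K * (⨆ x, μ (Icc x (x + h))) * ∫⁻ x in S n, g x := by
          gcongr
          exact (measure_mono (Ico_subset_Icc_self.trans (by rw [hright]))).trans
            (le_iSup (fun x => μ (Icc x (x + h))) _)
  calc (∫⁻ x, g x ∂μ) * ENNReal.ofReal h
      = ∑' n, (∫⁻ x in S n, g x ∂μ) * ENNReal.ofReal h := by
        rw [ENNReal.tsum_mul_right, ← lintegral_iUnion hS hdisj, hcover, setLIntegral_univ]
    _ ≤ ∑' n, K * (⨆ x, μ (Icc x (x + h))) * ∫⁻ x in S n, g x := ENNReal.tsum_le_tsum hpiece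
    _ = K * (⨆ x, μ (Icc x (x + h))) * ∫⁻ x, g x := by
        rw [ENNReal.tsum_mul_left, ← lintegral_iUnion hS hdisj, hcover, setLIntegral_univ]

section UniformlyLocallyFinite

variable {μ : Measure ℝ} {g : ℝ → ℝ} {h K : ℝ} (hg_meas : Measurable g) (hg0 : 0 ≤ g)
  (hg_int : Integrable g) (hh : 0 < h) (hK : 0 ≤ K)
  (hM : (⨆ x, μ (Icc x (x + h))) ≠ ∞) (hg : ∀ x y, |x - y| < h → g x ≤ K * g y)
include hg0 hg_int hh hK hg

theorem lintegral_ofReal_mul_le_of_le_mul_of_abs_sub_lt :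
    (∫⁻ x, ENNReal.ofReal (g x) ∂μ) * ENNReal.ofReal h
      ≤ ENNReal.ofReal K * (⨆ x, μ (Icc x (x + h))) * ENNReal.ofReal (∫ x, g x) := by
  rw [ofReal_integral_eq_lintegral_ofReal hg_int (ae_of_all _ hg0)]
  refine lintegral_mul_le_of_le_mul_of_abs_sub_lt hh ENNReal.ofReal_ne_top fun x y hxy => ?_
  rw [← ENNReal.ofReal_mul hK]
  exact ENNReal.ofReal_le_ofReal (hg x y hxy)

include hg_meas hM

theorem integrable_of_le_mul_of_abs_sub_lt : Integrable g μ := by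
  refine ⟨hg_meas.aestronglyMeasurable, (hasFiniteIntegral_iff_ofReal (ae_of_all _ hg0)).2 ?_⟩
  refine ENNReal.lt_top_of_mul_ne_top_left (ne_top_of_le_ne_top ?_
    (lintegral_ofReal_mul_le_of_le_mul_of_abs_sub_lt hg0 hg_int hh hK hg)) (by simpa using hh)
  exact ENNReal.mul_ne_top (ENNReal.mul_ne_top ENNReal.ofReal_ne_top hM) ENNReal.ofReal_ne_top

theorem integral_mul_le_of_le_mul_of_abs_sub_lt :
    (∫ x, g x ∂μ) * h ≤ K * (⨆ x, μ (Icc x (x + h))).toReal * ∫ x, g x := by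
  have hbound := lintegral_ofReal_mul_le_of_le_mul_of_abs_sub_lt (μ := μ) hg0 hg_int hh hK hg
  rw [integral_eq_lintegral_of_nonneg_ae (ae_of_all _ hg0) hg_meas.aestronglyMeasurable]
  have hfin : ENNReal.ofReal K * (⨆ x, μ (Icc x (x + h))) * ENNReal.ofReal (∫ x, g x) ≠ ∞ :=
    ENNReal.mul_ne_top (ENNReal.mul_ne_top ENNReal.ofReal_ne_top hM) ENNReal.ofReal_ne_top
  simpa [ENNReal.toReal_mul, hh.le, hK, integral_nonneg hg0] using
    ENNReal.toReal_mono hfin hbound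

end UniformlyLocallyFinite

theorem tendsto_log_one_add_sq_sub_log_one_add_sub_sq (c : ℝ) :
    Tendsto (fun y : ℝ => log (1 + y ^ 2) - log (1 + (y - c) ^ 2)) (cobounded ℝ) (𝓝 0) := by
  have hF : Tendsto (fun t : ℝ => log ((t ^ 2 + 1) / (t ^ 2 + (1 - c * t) ^ 2))) (𝓝 0) (𝓝 0) := by
    have : ContinuousAt (fun t : ℝ => log ((t ^ 2 + 1) / (t ^ 2 + (1 - c * t) ^ 2))) 0 := by
      fun_prop (disch := norm_num)
    simpa using this.tendsto
  refine (hF.comp tendsto_inv₀_cobounded).congr' ?_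
  filter_upwards [eventually_ne_cobounded 0] with y hy
  rw [Function.comp_apply, ← log_div (by positivity) (by positivity)]
  congr 1
  field_simp

theorem tendsto_div_one_add_sq_cobounded :
    Tendsto (fun y : ℝ => y / (1 + y ^ 2)) (cobounded ℝ) (𝓝 0) := by
  have hF : Tendsto (fun t : ℝ => t / (t ^ 2 + 1)) (𝓝 0) (𝓝 0) := by
    have : ContinuousAt (fun t : ℝ => t / (t ^ 2 + 1)) 0 := by fun_prop (disch := positivity)
    simpa using this.tendsto
  refine (hF.comp tendsto_inv₀_cobounded).congr' ?_
  filter_upwards [eventually_ne_cobounded 0] with y hy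
  simp only [Function.comp_apply]
  field_simp

theorem tendsto_arctan_add_arctan_sub_atTop (c : ℝ) :
    Tendsto (fun y => arctan y + arctan (y - c)) atTop (𝓝 π) := by
  have h := tendsto_arctan_atTop.mono_right nhdsWithin_le_nhds
  simpa [sub_eq_add_neg] using h.add (h.comp (tendsto_atTop_add_const_right _ (-c) tendsto_id))

theorem tendsto_arctan_add_arctan_sub_atBot (c : ℝ) :
    Tendsto (fun y => arctan y + arctan (y - c)) atBot (𝓝 (-π)) := by
  have h := tendsto_arctan_atBot.mono_right nhdsWithin_le_nhds
  convert h.add (h.comp (tendsto_atBot_add_const_right _ (-c) tendsto_id)) using 2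
  · simp [sub_eq_add_neg]
  · ring

theorem integrable_inv_one_add_sq_mul_inv_one_add_sub_sq (c : ℝ) :
    Integrable fun y : ℝ => (1 + y ^ 2)⁻¹ * (1 + (y - c) ^ 2)⁻¹ := by
  refine (integrable_inv_one_add_sq.comp_sub_right c).mono' (by fun_prop) (ae_of_all _ fun y => ?_)
  rw [norm_of_nonneg (by positivity)]
  exact mul_le_of_le_one_left (by positivity) (inv_le_one_of_one_le₀ (by nlinarith))

theorem integral_inv_one_add_sq_mul_inv_one_add_sub_sq_of_ne_zero {c : ℝ} (hc : c ≠ 0) :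
    ∫ y : ℝ, (1 + y ^ 2)⁻¹ * (1 + (y - c) ^ 2)⁻¹ = 2 * π / (4 + c ^ 2) := by
  set G : ℝ → ℝ := fun y => (log (1 + y ^ 2) - log (1 + (y - c) ^ 2)) / (c * (4 + c ^ 2))
      + (arctan y + arctan (y - c)) / (4 + c ^ 2)
  have hG : ∀ y, HasDerivAt G ((1 + y ^ 2)⁻¹ * (1 + (y - c) ^ 2)⁻¹) y := fun y => by
    have h1 : HasDerivAt (fun y : ℝ => 1 + y ^ 2) (2 * y) y := by
      simpa using (hasDerivAt_pow 2 y).const_add 1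
    have h2 : HasDerivAt (fun y : ℝ => 1 + (y - c) ^ 2) (2 * (y - c)) y := by
      simpa using (((hasDerivAt_id y).sub_const c).pow 2).const_add 1
    have h3 : HasDerivAt (fun y : ℝ => arctan (y - c)) (1 + (y - c) ^ 2)⁻¹ y :=
      (hasDerivAt_arctan' (y - c)).comp_sub_const y c
    refine ((((h1.log (by positivity)).sub (h2.log (by positivity))).div_const _).add
      (((hasDerivAt_arctan' y).add h3).div_const _)).congr_deriv ?_
    have : 1 + (y - c) ^ 2 ≠ 0 := by positivity
    field_simp
    ring
  have hlog := (tendsto_log_one_add_sq_sub_log_one_add_sub_sq c).div_const (c * (4 + c ^ 2))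
  rw [zero_div] at hlog
  have htop := (hlog.mono_left IsOrderBornology.atTop_le_cobounded).add
    ((tendsto_arctan_add_arctan_sub_atTop c).div_const (4 + c ^ 2))
  have hbot := (hlog.mono_left IsOrderBornology.atBot_le_cobounded).add
    ((tendsto_arctan_add_arctan_sub_atBot c).div_const (4 + c ^ 2))
  rw [integral_of_hasDerivAt_of_tendsto hG (integrable_inv_one_add_sq_mul_inv_one_add_sub_sq c)
    hbot htop]
  ring

theorem integral_inv_one_add_sq_sq :
    ∫ y : ℝ, ((1 + y ^ 2)⁻¹) ^ 2 = π / 2 := by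
  set H : ℝ → ℝ := fun y => (arctan y + y / (1 + y ^ 2)) / 2
  have hH : ∀ y, HasDerivAt H (((1 + y ^ 2)⁻¹) ^ 2) y := fun y => by
    have h1 : HasDerivAt (fun y : ℝ => 1 + y ^ 2) (2 * y) y := by
      simpa using (hasDerivAt_pow 2 y).const_add 1
    refine (((hasDerivAt_arctan' y).add ((hasDerivAt_id' y).div h1 (by positivity))).div_const
      2).congr_deriv ?_
    field_simp
    ring
  have htop := ((tendsto_arctan_atTop.mono_right nhdsWithin_le_nhds).add
    (tendsto_div_one_add_sq_cobounded.mono_left IsOrderBornology.atTop_le_cobounded)).div_const 2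
  have hbot := ((tendsto_arctan_atBot.mono_right nhdsWithin_le_nhds).add
    (tendsto_div_one_add_sq_cobounded.mono_left IsOrderBornology.atBot_le_cobounded)).div_const 2
  rw [integral_of_hasDerivAt_of_tendsto hH (by simpa [sq] using
    integrable_inv_one_add_sq_mul_inv_one_add_sub_sq 0) hbot htop]
  ring

theorem integral_inv_one_add_sq_mul_inv_one_add_sub_sq (c : ℝ) :
    ∫ y : ℝ, (1 + y ^ 2)⁻¹ * (1 + (y - c) ^ 2)⁻¹ = 2 * π / (4 + c ^ 2) := by
  rcases eq_or_ne c 0 with rfl | hc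
  · simp only [sub_zero, ← sq, integral_inv_one_add_sq_sq]
    ring
  · exact integral_inv_one_add_sq_mul_inv_one_add_sub_sq_of_ne_zero hc

theorem integrable_inv_one_add_sub_sq_mul_comp_mul {α : ℝ} (hα : α ≠ 0) (a b : ℝ) :
    Integrable fun x : ℝ => (1 + (α * x - a) ^ 2)⁻¹ * (1 + (α * x - b) ^ 2)⁻¹ := by
  simpa [sub_sub_sub_cancel_right] using
    ((integrable_inv_one_add_sq_mul_inv_one_add_sub_sq (b - a)).comp_sub_right a).comp_mul_left' hα

theorem integral_inv_one_add_sub_sq_mul_comp_mul (α a b : ℝ) :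
    ∫ x : ℝ, (1 + (α * x - a) ^ 2)⁻¹ * (1 + (α * x - b) ^ 2)⁻¹
      = |α|⁻¹ * (2 * π / (4 + (b - a) ^ 2)) := by
  have hshift := integral_sub_right_eq_self (μ := volume)
    (fun z : ℝ => (1 + z ^ 2)⁻¹ * (1 + (z - (b - a)) ^ 2)⁻¹) a
  simp only [sub_sub_sub_cancel_right] at hshift
  rw [Measure.integral_comp_mul_left (fun y : ℝ => (1 + (y - a) ^ 2)⁻¹ * (1 + (y - b) ^ 2)⁻¹) α,
    hshift, integral_inv_one_add_sq_mul_inv_one_add_sub_sq, smul_eq_mul, abs_inv]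

theorem sq_le_two_mul_inv_one_add_sq {y t : ℝ} (h : |y| ≤ min 1 |t|⁻¹) :
    y ^ 2 ≤ 2 * (1 + t ^ 2)⁻¹ := by
  have hy : y ^ 2 ≤ 1 := sq_le_one_iff_abs_le_one y |>.2 (h.trans (min_le_left _ _))
  have hyt : (y * t) ^ 2 ≤ 1 := by
    refine sq_le_one_iff_abs_le_one _ |>.2 ?_
    rw [abs_mul]
    calc |y| * |t| ≤ |t|⁻¹ * |t| := by gcongr; exact h.trans (min_le_right _ _)
      _ ≤ 1 := by
        rcases eq_or_ne t 0 with rfl | ht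
        · simp
        · rw [inv_mul_cancel₀ (abs_ne_zero.2 ht)]
  rw [← div_eq_mul_inv, le_div_iff₀ (by positivity)]
  nlinarith

theorem inv_one_add_sq_le_of_abs_sub_le {u v δ : ℝ} (h : |u - v| ≤ δ) :
    (1 + u ^ 2)⁻¹ ≤ 2 * (1 + δ ^ 2) * (1 + v ^ 2)⁻¹ := by
  have hδ : (u - v) ^ 2 ≤ δ ^ 2 := sq_le_sq' (abs_le.1 h).1 (abs_le.1 h).2
  -- Peetre's inequality
  have hpeetre : 1 + v ^ 2 ≤ 2 * (1 + (u - v) ^ 2) * (1 + u ^ 2) := by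
    nlinarith [sq_nonneg (u + v), sq_nonneg (u * (u - v))]
  rw [← div_eq_mul_inv, inv_eq_one_div, div_le_div_iff₀ (by positivity) (by positivity)]
  nlinarith [sq_nonneg u]

theorem inv_one_add_sub_sq_mul_le_of_abs_sub_le {s t δ : ℝ} (h : |s - t| ≤ δ) (a b : ℝ) :
    (1 + (s - a) ^ 2)⁻¹ * (1 + (s - b) ^ 2)⁻¹
      ≤ (2 * (1 + δ ^ 2)) ^ 2 * ((1 + (t - a) ^ 2)⁻¹ * (1 + (t - b) ^ 2)⁻¹) := by
  have hd : ∀ c, |(s - c) - (t - c)| ≤ δ := fun c => by rwa [sub_sub_sub_cancel_right]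
  calc (1 + (s - a) ^ 2)⁻¹ * (1 + (s - b) ^ 2)⁻¹
      ≤ (2 * (1 + δ ^ 2) * (1 + (t - a) ^ 2)⁻¹) * (2 * (1 + δ ^ 2) * (1 + (t - b) ^ 2)⁻¹) :=
        mul_le_mul (inv_one_add_sq_le_of_abs_sub_le (hd a))
          (inv_one_add_sq_le_of_abs_sub_le (hd b)) (by positivity) (by positivity)
    _ = (2 * (1 + δ ^ 2)) ^ 2 * ((1 + (t - a) ^ 2)⁻¹ * (1 + (t - b) ^ 2)⁻¹) := by ring

theorem two_mul_one_add_sq_le_max (δ : ℝ) : 2 * (1 + δ ^ 2) ≤ max 4 (1 + 9 * δ ^ 2) := by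
  rcases le_total (δ ^ 2) 1 with h | h
  · exact le_max_of_le_left (by linarith)
  · exact le_max_of_le_right (by linarith)

theorem xi_product_measure_bound_dilated_general (Ξ : ℝ → ℝ)
    (hΞ : ∀ x, |Ξ x| ≤ min 1 |x|⁻¹) (α δ : ℝ) (hα : 0 < α) (hδ : 0 < δ)
    (μ : Measure ℝ)
    (hfin : (⨆ x : ℝ, μ (Set.Icc x (x + δ / α))) ≠ ⊤) (a b : ℝ) :
    ∫ x : ℝ, Ξ (α * x - a) ^ 2 * Ξ (α * x - b) ^ 2 ∂μ ≤
      8 * π * ((max 4 (1 + 9 * δ ^ 2)) ^ 2 / δ) *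
        (⨆ x : ℝ, μ (Set.Icc x (x + δ / α))).toReal / (4 + (b - a) ^ 2) := by
  set C := max 4 (1 + 9 * δ ^ 2)
  set G : ℝ → ℝ := fun x => (1 + (α * x - a) ^ 2)⁻¹ * (1 + (α * x - b) ^ 2)⁻¹
  have hG0 : 0 ≤ G := fun x => by positivity
  have hG_int : Integrable G := integrable_inv_one_add_sub_sq_mul_comp_mul hα.ne' a b
  have hG_comp : ∀ x y, |x - y| < δ / α → G x ≤ C ^ 2 * G y := fun x y hxy => by
    have hd : |α * x - α * y| ≤ δ := by
      rw [← mul_sub, abs_mul, abs_of_pos hα]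
      exact ((lt_div_iff₀' hα).1 hxy).le
    refine (inv_one_add_sub_sq_mul_le_of_abs_sub_le hd a b).trans ?_
    gcongr
    exact two_mul_one_add_sq_le_max δ
  have hG_meas : Measurable G := by fun_prop
  have hG_μ := integrable_of_le_mul_of_abs_sub_lt hG_meas hG0 hG_int (div_pos hδ hα)
    (sq_nonneg C) hfin hG_comp
  have hmean := integral_mul_le_of_le_mul_of_abs_sub_lt hG_meas hG0 hG_int (div_pos hδ hα)
    (sq_nonneg C) hfin hG_comp
  rw [integral_inv_one_add_sub_sq_mul_comp_mul, abs_of_pos hα] at hmean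
  set M := (⨆ x, μ (Icc x (x + δ / α))).toReal
  calc ∫ x, Ξ (α * x - a) ^ 2 * Ξ (α * x - b) ^ 2 ∂μ ≤ ∫ x, 4 * G x ∂μ :=
        integral_mono_of_nonneg (ae_of_all _ fun x => by positivity) (hG_μ.const_mul 4)
          (ae_of_all _ fun x => (mul_le_mul (sq_le_two_mul_inv_one_add_sq (hΞ _))
            (sq_le_two_mul_inv_one_add_sq (hΞ _)) (by positivity) (by positivity)).trans_eq
              (by ring))
    _ = 4 * ((∫ x, G x ∂μ) * (δ / α)) * (α / δ) := by
        rw [integral_const_mul]; field_simp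
    _ ≤ 4 * (C ^ 2 * M * (α⁻¹ * (2 * π / (4 + (b - a) ^ 2)))) * (α / δ) := by gcongr
    _ = _ := by field_simp; ring

theorem xi_product_measure_bound_dilated (Ξ : ℝ → ℝ) (hΞc : Continuous Ξ)
    (hΞ : ∀ x, |Ξ x| ≤ min 1 |x|⁻¹) (α δ : ℝ) (hα : 0 < α) (hδ : 0 < δ)
    (μ : Measure ℝ) [SigmaFinite μ]
    (hfin : (⨆ x : ℝ, μ (Set.Icc x (x + δ / α))) ≠ ⊤) (a b : ℝ) :
    ∫ x : ℝ, Ξ (α * x - a) ^ 2 * Ξ (α * x - b) ^ 2 ∂μ ≤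
      8 * π * ((max 4 (1 + 9 * δ ^ 2)) ^ 2 / δ) *
        (⨆ x : ℝ, μ (Set.Icc x (x + δ / α))).toReal / (4 + (b - a) ^ 2) :=
  xi_product_measure_bound_dilated_general Ξ hΞ α δ hα hδ μ hfin a b
end
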